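/- arXiv:0810.2441 — 3 statements merged into one kernel-verified Lean document; each statement's English description precedes it below -/
import Mathlib

section
/- Let A = (a_1,...,a_m) and B = (b_1,...,b_n) be alphabets of independent variables, and let R(A,B) = ∏_{i=1}^m ∏_{j=1}^n (a_i - b_j) be their resultant. Then R(A,B) = S_{(n^m)}(A - B), where (n^m) is the rectangular partition with m parts each equal to n. -/
/-!
Let `P = ∏_{a ∈ A} (X - a)` and `Q = ∏_{b ∈ B} (X - b)`. Multiplicativity of the resultant
gives `Res(P, Q) = ∏_a Q(a) = ∏_{a,b} (a - b)`. Reversing the order of rows and columns of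
the Sylvester matrix turns it into the Sylvester matrix of the reversed polynomials
`f = ∏ (1 - b z)` and `g = ∏ (1 - a z)`, whose columns are the first `n` columns of the
lower triangular Toeplitz matrix `T_g` of `g` followed by the first `m` columns of `T_f`.
Since `f = h g` with `h = ∑_j S_j(A - B) z^j`, we have `T_f = T_g T_h`, so the Sylvester
matrix is `T_g` times a block upper triangular matrix with diagonal blocks `1` and
`(S_{n+p-q}(A - B))_{p,q}`; as `det T_g = 1`, the resultant is `S_{(n^m)}(A - B)`.
-/

/-- The generating series `∏_{a ∈ A} (1 - a z)` of an alphabet `A` (a finite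
multiset of elements of a commutative ring `R`). -/
noncomputable def gen {R : Type*} [CommRing R] (A : Multiset R) : PowerSeries R :=
  (A.map (fun a => 1 - PowerSeries.C a * PowerSeries.X)).prod

/-- `IsSeriesOf A B S` says that `S : ℤ → R` is the family of complete functions
`S_j(A - B)` of the difference of alphabets `A - B`, i.e. `S j = 0` for `j < 0` and
`∑_j S_j z^j = ∏_{b ∈ B}(1 - b z) / ∏_{a ∈ A}(1 - a z)`, formulated as
`(∑_j S_j z^j) · ∏_{a ∈ A}(1 - a z) = ∏_{b ∈ B}(1 - b z)` in `R⟦z⟧`. -/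
def IsSeriesOf {R : Type*} [CommRing R] (A B : Multiset R) (S : ℤ → R) : Prop :=
  (∀ j : ℤ, j < 0 → S j = 0) ∧
    (PowerSeries.mk fun n : ℕ => S (n : ℤ)) * gen A = gen B

/-- The Schur function `S_I(A - B)` of a finite sequence `I = (i_1, …, i_s)`
(written in increasing, "French", order), given the complete functions
`S = (S_j(A-B))_j`, defined by the Jacobi–Trudi determinant
`det(S_{i_p + p - q})_{1 ≤ p,q ≤ s}`. -/
noncomputable def schur {R : Type*} [CommRing R] (S : ℤ → R) {s : ℕ} (I : Fin s → ℤ) : R :=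
  Matrix.det (Matrix.of fun p q : Fin s => S (I p + (p : ℤ) - (q : ℤ)))

namespace PowerSeries

open scoped Polynomial

variable {R : Type*} [CommRing R]

/-- The matrix of multiplication by `φ` on `R⟦X⟧ / (X ^ N)` in the basis
`1, X, …, X ^ (N - 1)`. -/
noncomputable def toeplitz (φ : R⟦X⟧) (N : ℕ) : Matrix (Fin N) (Fin N) R :=
  Matrix.of fun i j => if j ≤ i then coeff (i - j : ℕ) φ else 0

theorem toeplitz_mul (φ ψ : R⟦X⟧) (N : ℕ) :
    toeplitz (φ * ψ) N = toeplitz φ N * toeplitz ψ N := by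
  ext i j
  have hwindow : (Finset.range N).filter (fun k => k ≤ (i : ℕ) ∧ (j : ℕ) ≤ k)
      = Finset.Ico (j : ℕ) (i + 1) := by
    ext k
    simp only [Finset.mem_filter, Finset.mem_range, Finset.mem_Ico]
    omega
  simp only [toeplitz, Matrix.mul_apply, Matrix.of_apply, Fin.le_def, ite_zero_mul_ite_zero]
  rw [Fin.sum_univ_eq_sum_range (fun k => if k ≤ (i : ℕ) ∧ (j : ℕ) ≤ k then
    coeff (i - k) φ * coeff (k - j) ψ else 0), ← Finset.sum_filter, hwindow,
    Finset.sum_Ico_eq_sum_range]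
  split_ifs with hji
  · rw [mul_comm, coeff_mul, Finset.Nat.sum_antidiagonal_eq_sum_range_succ
      (fun a b => coeff a ψ * coeff b φ), show (i : ℕ) + 1 - j = (i - j : ℕ).succ by omega]
    refine Finset.sum_congr rfl fun l hl => ?_
    rw [Finset.mem_range] at hl
    rw [mul_comm, Nat.add_sub_cancel_left, show (i : ℕ) - (j + l) = i - j - l by omega]
  · rw [show (i : ℕ) + 1 - j = 0 by omega, Finset.sum_range_zero]

theorem det_toeplitz (φ : R⟦X⟧) (N : ℕ) : (toeplitz φ N).det = constantCoeff φ ^ N := by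
  rw [Matrix.det_of_isLowerTriangular (toeplitz φ N) fun i j hij => if_neg (not_le.mpr hij)]
  simp [toeplitz]

theorem toeplitz_coe_apply {p : R[X]} {d : ℕ} (hp : p.natDegree ≤ d) {N : ℕ} (i j : Fin N) :
    toeplitz (p : R⟦X⟧) N i j =
      if (j : ℕ) ≤ i ∧ (i : ℕ) ≤ j + d then p.coeff (i - j) else 0 := by
  simp only [toeplitz, Matrix.of_apply, Fin.le_def, Polynomial.coeff_coe]
  split_ifs <;> first | rfl | omega | rw [Polynomial.coeff_eq_zero_of_natDegree_lt (by omega)]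

theorem toeplitz_mk_apply {S : ℤ → R} (hS₀ : ∀ j < 0, S j = 0) {N : ℕ} (i j : Fin N) :
    toeplitz (mk fun k : ℕ => S k) N i j = S (i - j) := by
  simp only [toeplitz, Matrix.of_apply, Fin.le_def, coeff_mk]
  split_ifs
  · congr 1
    omega
  · exact (hS₀ _ (by omega)).symm

end PowerSeries

namespace Polynomial

open scoped PowerSeries

variable {R : Type*} [CommRing R]

theorem sylvester_apply (f g : R[X]) (m n : ℕ) (i j : Fin (m + n)) :
    sylvester f g m n i j =
      if (j : ℕ) < m then (if (j : ℕ) ≤ i ∧ (i : ℕ) ≤ j + n then g.coeff (i - j) else 0)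
      else (if (j : ℕ) - m ≤ i ∧ (i : ℕ) ≤ j then f.coeff (i - (j - m)) else 0) := by
  induction j using Fin.addCases with
  | left j => simp [sylvester, j.isLt]
  | right j => simp [sylvester, add_comm m]

theorem sylvester_reflect (f g : R[X]) (m n : ℕ) :
    sylvester (reflect n g) (reflect m f) n m =
      (sylvester f g m n).reindex ((finCongr (add_comm m n)).trans Fin.revPerm)
        ((finCongr (add_comm m n)).trans Fin.revPerm) := by
  ext i j
  have hi := i.isLt
  have hj := j.isLt
  simp only [Matrix.reindex_apply, Matrix.submatrix_apply, sylvester_apply, coeff_reflect,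
    Equiv.symm_trans_apply, Fin.revPerm_symm, Fin.revPerm_apply, finCongr_symm,
    finCongr_apply, Fin.val_cast, Fin.val_rev]
  split_ifs <;> first | rfl | omega | (congr 1; rw [revAt_le (by omega)]; omega)

theorem resultant_reflect (f g : R[X]) (m n : ℕ) :
    resultant (reflect n g) (reflect m f) n m = resultant f g m n := by
  rw [resultant, sylvester_reflect, Matrix.det_reindex_self, resultant]

theorem resultant_prod_X_sub_C (A B : Multiset R) :
    resultant (A.map fun a => X - C a).prod (B.map fun b => X - C b).prod
        (Multiset.card A) (Multiset.card B) =
      (A.map fun a => (B.map fun b => a - b).prod).prod := by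
  nontriviality R
  have hB := (natDegree_multiset_prod_X_sub_C_eq_card B).le
  induction A using Multiset.induction with
  | empty => simp
  | cons a A ih =>
    rw [Multiset.map_cons, Multiset.prod_cons, Multiset.card_cons, add_comm,
      ← natDegree_X_sub_C a, ← natDegree_multiset_prod_X_sub_C_eq_card A,
      resultant_mul_left _ _ _ _ hB, natDegree_X_sub_C, natDegree_multiset_prod_X_sub_C_eq_card,
      resultant_X_sub_C_left _ _ _ hB, ih, Multiset.map_cons, Multiset.prod_cons,
      eval_multiset_prod]
    simp

theorem reflect_prod_X_sub_C (A : Multiset R) :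
    reflect (Multiset.card A) (A.map fun a => X - C a).prod =
      (A.map fun a => 1 - C a * X).prod := by
  nontriviality R
  induction A using Multiset.induction with
  | empty => simp
  | cons a A ih =>
    rw [Multiset.map_cons, Multiset.prod_cons, Multiset.card_cons, add_comm,
      reflect_mul _ _ (natDegree_X_sub_C_le a) (natDegree_multiset_prod_X_sub_C_eq_card A).le,
      ih, Multiset.map_cons, Multiset.prod_cons]
    simp [reflect_sub, reflect_C]

theorem natDegree_prod_one_sub_C_mul_X_le (A : Multiset R) :
    (A.map fun a => 1 - C a * X).prod.natDegree ≤ Multiset.card A := by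
  refine (natDegree_multiset_prod_le _).trans ?_
  refine (Multiset.sum_le_card_nsmul _ 1 ?_).trans (by simp)
  simp only [Multiset.map_map, Multiset.mem_map, Function.comp_apply]
  rintro _ ⟨a, _, rfl⟩
  compute_degree

theorem coeff_zero_prod_one_sub_C_mul_X (A : Multiset R) :
    (A.map fun a => 1 - C a * X).prod.coeff 0 = 1 := by
  simp [coeff_zero_multiset_prod]

noncomputable def jacobiTrudiBlock (S : ℤ → R) (n m : ℕ) :
    Matrix (Fin (n + m)) (Fin (n + m)) R :=
  (Matrix.fromBlocks 1 (.of fun (p : Fin n) (q : Fin m) => S (p - q))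
    0 (.of fun p q : Fin m => S (n + p - q))).reindex finSumFinEquiv finSumFinEquiv

theorem jacobiTrudiBlock_apply_castAdd (S : ℤ → R) {n m : ℕ} (k : Fin (n + m)) (q : Fin n) :
    jacobiTrudiBlock S n m k (Fin.castAdd m q) = if k = Fin.castAdd m q then 1 else 0 := by
  induction k using Fin.addCases <;> simp [jacobiTrudiBlock, Matrix.one_apply, Fin.ext_iff]
  omega

theorem jacobiTrudiBlock_apply_natAdd (S : ℤ → R) {n m : ℕ} (k : Fin (n + m)) (q : Fin m) :
    jacobiTrudiBlock S n m k (Fin.natAdd n q) = S (k - q) := by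
  induction k using Fin.addCases <;> simp [jacobiTrudiBlock]

theorem det_jacobiTrudiBlock (S : ℤ → R) (n m : ℕ) :
    (jacobiTrudiBlock S n m).det = (Matrix.of fun p q : Fin m => S (n + p - q)).det := by
  rw [jacobiTrudiBlock, Matrix.det_reindex_self, Matrix.det_fromBlocks_zero₂₁, Matrix.det_one,
    one_mul]

open PowerSeries in
theorem sylvester_eq_toeplitz_mul_jacobiTrudiBlock {f g : R[X]} {m n : ℕ}
    (hf : f.natDegree ≤ n) (hg : g.natDegree ≤ m) {S : ℤ → R} (hS₀ : ∀ j < 0, S j = 0)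
    (hS : PowerSeries.mk (fun k : ℕ => S k) * (g : R⟦X⟧) = f) :
    sylvester f g n m = toeplitz (g : R⟦X⟧) (n + m) * jacobiTrudiBlock S n m := by
  ext i j
  induction j using Fin.addCases with
  | left q =>
    simp only [Matrix.mul_apply, jacobiTrudiBlock_apply_castAdd, mul_ite, mul_one, mul_zero,
      Finset.sum_ite_eq', Finset.mem_univ, if_true, toeplitz_coe_apply hg, sylvester_apply]
    simp
  | right q =>
    -- column `n + q` of the product is column `q` of `T_g T_h = T_f`
    have hcol := congrFun (congrFun (toeplitz_mul g (mk fun k : ℕ => S k) (n + m)) i)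
      (Fin.castLE (by omega) q)
    rw [mul_comm, hS, toeplitz_coe_apply hf, Matrix.mul_apply] at hcol
    simp only [Matrix.mul_apply, jacobiTrudiBlock_apply_natAdd, toeplitz_mk_apply hS₀,
      Fin.val_castLE] at hcol ⊢
    rw [← hcol, sylvester_apply]
    simp [add_comm]

theorem det_sylvester_eq_det_of_mul_eq {f g : R[X]} {m n : ℕ} (hf : f.natDegree ≤ n)
    (hg : g.natDegree ≤ m) (hg₀ : g.coeff 0 = 1) {S : ℤ → R} (hS₀ : ∀ j < 0, S j = 0)
    (hS : PowerSeries.mk (fun k : ℕ => S k) * (g : R⟦X⟧) = f) :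
    (sylvester f g n m).det = (Matrix.of fun p q : Fin m => S (n + p - q)).det := by
  rw [sylvester_eq_toeplitz_mul_jacobiTrudiBlock hf hg hS₀ hS, Matrix.det_mul,
    PowerSeries.det_toeplitz, det_jacobiTrudiBlock]
  simp [hg₀]

end Polynomial

open Polynomial in
theorem gen_eq_coe_prod {R : Type*} [CommRing R] (A : Multiset R) :
    gen A = ((A.map fun a => 1 - C a * X).prod : R[X]) := by
  rw [gen, ← coeToPowerSeries.ringHom_apply, map_multiset_prod, Multiset.map_map]
  simp [Function.comp_def, coeToPowerSeries.ringHom_apply]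

/-- **The resultant as a Schur function:** `R(A,B) = ∏_{a ∈ A, b ∈ B} (a - b)`
equals `S_{(n^m)}(A - B)`, the Schur function of the rectangular partition with
`m` parts equal to `n`, where `m = card A` and `n = card B`. -/
theorem resultant_eq_schur_rectangle {R : Type*} [CommRing R] (m n : ℕ) (A B : Multiset R)
    (hA : Multiset.card A = m) (hB : Multiset.card B = n)
    (S : ℤ → R) (hS : IsSeriesOf A B S) :
    (A.map (fun a => (B.map fun b => a - b).prod)).prod =
      schur S (fun _ : Fin m => (n : ℤ)) := by
  open Polynomial in
  subst hA hB
  obtain ⟨hS₀, hS⟩ := hS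
  rw [gen_eq_coe_prod, gen_eq_coe_prod] at hS
  rw [← resultant_prod_X_sub_C, ← resultant_reflect, reflect_prod_X_sub_C, reflect_prod_X_sub_C]
  exact det_sylvester_eq_det_of_mul_eq (natDegree_prod_one_sub_C_mul_X_le B)
    (natDegree_prod_one_sub_C_mul_X_le A) (coeff_zero_prod_one_sub_C_mul_X A) hS₀ hS
end

section
/- Factorization property: Let A be an alphabet of cardinality m and B an alphabet of cardinality n. Let I = (i_1 ≤ ... ≤ i_m) and J = (j_1 ≤ ... ≤ j_s) be partitions. Then the Schur function of the partition (j_1, ..., j_s, i_1 + n, ..., i_m + n) satisfies S_{(j_1,...,j_s,i_1+n,...,i_m+n)}(A - B) = S_I(A) · R(A,B) · S_J(-B), where R(A,B) = ∏_{a∈A, b∈B}(a-b), S_I(A) is the ordinary Schur polynomial of A, and S_J(-B) = S_J(∅ - B). -/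
section

open PowerSeries Finset Matrix

variable {R : Type*} [CommRing R]

noncomputable def coeffZ (f : R⟦X⟧) (k : ℤ) : R :=
  if 0 ≤ k then coeff k.toNat f else 0

theorem coeffZ_of_neg (f : R⟦X⟧) {k : ℤ} (hk : k < 0) : coeffZ f k = 0 :=
  if_neg hk.not_ge

@[simp]
theorem coeffZ_natCast (f : R⟦X⟧) (n : ℕ) : coeffZ f n = coeff n f := by
  simp [coeffZ]

theorem coeffZ_mk {S : ℤ → R} (hS : ∀ k < 0, S k = 0) :
    coeffZ (PowerSeries.mk fun n : ℕ => S n) = S := by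
  funext k
  rcases lt_or_ge k 0 with hk | hk
  · rw [coeffZ_of_neg _ hk, hS k hk]
  · lift k to ℕ using hk
    simp

theorem mk_coeffZ (f : R⟦X⟧) : PowerSeries.mk (fun n : ℕ => coeffZ f n) = f := by
  ext n
  simp

theorem coeffZ_one_sub_C_mul_X_mul (b : R) (f : R⟦X⟧) (k : ℤ) :
    coeffZ ((1 - C b * X) * f) k = coeffZ f k - b * coeffZ f (k - 1) := by
  rcases lt_or_ge k 0 with hk | hk
  · simp [coeffZ_of_neg _ hk, coeffZ_of_neg _ (show k - 1 < 0 by omega)]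
  lift k to ℕ using hk
  have hsplit : (1 - C b * X) * f = f - C b * (X * f) := by ring
  cases k with
  | zero =>
    rw [hsplit, coeffZ_of_neg f (show ((0 : ℕ) : ℤ) - 1 < 0 by norm_num)]
    simp only [coeffZ_natCast]
    simp
  | succ n =>
    rw [hsplit, Nat.cast_succ, add_sub_cancel_right, ← Nat.cast_succ, coeffZ_natCast,
      coeffZ_natCast, coeffZ_natCast, map_sub, coeff_C_mul, coeff_succ_X_mul]

theorem coeffZ_mul_eq_sum_range (f g : R⟦X⟧) {M : ℕ} (hf : ∀ j, M < j → coeff j f = 0)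
    (k : ℤ) : coeffZ (f * g) k = ∑ j ∈ range (M + 1), coeff j f * coeffZ g (k - j) := by
  rcases lt_or_ge k 0 with hk | hk
  · rw [coeffZ_of_neg _ hk]
    exact (sum_eq_zero fun j _ => by rw [coeffZ_of_neg _ (by omega), mul_zero]).symm
  lift k to ℕ using hk
  have hsub : ∀ N, k ≤ N → M ≤ N → ∑ j ∈ range (N + 1), coeff j f * coeffZ g (k - j) =
      ∑ j ∈ range (M + 1), coeff j f * coeffZ g (k - j) := fun N hkN hMN =>
    (sum_subset (range_subset_range.2 (by omega)) fun j _ hj => by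
      rw [hf j (by simpa using hj), zero_mul]).symm
  rw [← hsub (k + M) (by omega) (by omega), coeffZ_natCast, coeff_mul,
    Nat.sum_antidiagonal_eq_sum_range_succ_mk]
  refine sum_subset_zero_on_sdiff (range_subset_range.2 (by omega)) ?_ ?_
  · intro j hj
    rw [mem_sdiff, mem_range, mem_range] at hj
    rw [coeffZ_of_neg _ (by omega), mul_zero]
  · intro j hj
    rw [mem_range] at hj
    rw [show (k : ℤ) - j = ((k - j : ℕ) : ℤ) by omega, coeffZ_natCast]

theorem gen_zero : gen (0 : Multiset R) = 1 := by
  simp [gen]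

theorem gen_cons (a : R) (A : Multiset R) : gen (a ::ₘ A) = (1 - C a * X) * gen A := by
  simp [gen]

theorem constantCoeff_gen (A : Multiset R) : constantCoeff (gen A) = 1 := by
  simp [gen, map_multiset_prod]

theorem gen_mul_invOfUnit (A : Multiset R) : gen A * invOfUnit (gen A) 1 = 1 :=
  mul_invOfUnit _ _ (by simp [constantCoeff_gen])

theorem coeffZ_gen_of_card_lt (A : Multiset R) {k : ℤ} (hk : (Multiset.card A : ℤ) < k) :
    coeffZ (gen A) k = 0 := by
  induction A using Multiset.induction_on generalizing k with
  | empty =>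
    rw [Multiset.card_zero, Nat.cast_zero] at hk
    lift k to ℕ using hk.le
    rw [coeffZ_natCast, gen_zero, coeff_one, if_neg (by omega)]
  | cons a A ih =>
    rw [Multiset.card_cons, Nat.cast_succ] at hk
    rw [gen_cons, coeffZ_one_sub_C_mul_X_mul, ih (by omega), ih (by omega), mul_zero, sub_zero]

theorem coeff_gen_of_card_lt (A : Multiset R) {j : ℕ} (hj : Multiset.card A < j) :
    coeff j (gen A) = 0 := by
  simpa using coeffZ_gen_of_card_lt A (k := j) (by exact_mod_cast hj)

theorem coeffZ_gen_zero (A : Multiset R) : coeffZ (gen A) 0 = 1 := by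
  rw [← Nat.cast_zero, coeffZ_natCast, coeff_zero_eq_constantCoeff_apply, constantCoeff_gen]

theorem sum_coeffZ_gen_mul_pow (A : Multiset R) (b : R) :
    ∑ r ∈ range (Multiset.card A + 1), coeffZ (gen A) r * b ^ (Multiset.card A - r) =
      (A.map fun a => b - a).prod := by
  induction A using Multiset.induction_on with
  | empty => simp [gen_zero]
  | cons a A ih =>
    rw [gen_cons, Multiset.card_cons, Multiset.map_cons, Multiset.prod_cons, ← ih]
    have hlast : coeffZ (gen A) (Multiset.card A + 1 : ℕ) = 0 :=
      coeffZ_gen_of_card_lt A (by push_cast; omega)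
    generalize Multiset.card A = m at hlast ⊢
    have hshift : ∑ r ∈ range (m + 1 + 1), coeffZ (gen A) r * b ^ (m + 1 - r) =
        b * ∑ r ∈ range (m + 1), coeffZ (gen A) r * b ^ (m - r) := by
      rw [sum_range_succ, hlast, zero_mul, add_zero, mul_sum]
      refine sum_congr rfl fun r hr => ?_
      rw [mem_range] at hr
      rw [show m + 1 - r = m - r + 1 by omega, pow_succ]
      ring
    have hpred : ∑ r ∈ range (m + 1 + 1), coeffZ (gen A) (r - 1) * b ^ (m + 1 - r) =
        ∑ r ∈ range (m + 1), coeffZ (gen A) r * b ^ (m - r) := by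
      rw [sum_range_succ', coeffZ_of_neg _ (by norm_num), zero_mul, add_zero]
      simp
    simp only [coeffZ_one_sub_C_mul_X_mul]
    simp only [sub_mul, sum_sub_distrib, mul_assoc, ← mul_sum]
    rw [hshift, hpred]

theorem sum_fin_coeffZ_gen_rev_mul (A : Multiset R) (f : ℕ → R) :
    ∑ j : Fin (Multiset.card A + 1), coeffZ (gen A) (Multiset.card A - j) * f j =
      ∑ r ∈ range (Multiset.card A + 1), coeffZ (gen A) r * f (Multiset.card A - r) := by
  rw [Fin.sum_univ_eq_sum_range (fun j => coeffZ (gen A) (Multiset.card A - j) * f j),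
    ← sum_range_reflect]
  refine sum_congr rfl fun r hr => ?_
  rw [mem_range] at hr
  rw [Nat.add_sub_cancel, Nat.cast_sub (by omega), sub_sub_cancel]

namespace IsSeriesOf

variable {A B : Multiset R} {S S' : ℤ → R}

theorem eq_coeffZ_gen (h : IsSeriesOf 0 B S) : S = coeffZ (gen B) := by
  rw [← coeffZ_mk h.1, ← h.2, gen_zero, mul_one]

theorem mk_eq (h : IsSeriesOf A B S) :
    PowerSeries.mk (fun n : ℕ => S n) = gen B * invOfUnit (gen A) 1 := by
  rw [← h.2, mul_assoc, gen_mul_invOfUnit, mul_one]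

theorem unique (h : IsSeriesOf A B S) (h' : IsSeriesOf A B S') : S = S' := by
  rw [← coeffZ_mk h.1, ← coeffZ_mk h'.1, h.mk_eq, h'.mk_eq]

theorem cons_right (h : IsSeriesOf A B S) (b : R) :
    IsSeriesOf A (b ::ₘ B) (fun k => S k - b * S (k - 1)) := by
  refine ⟨fun k hk => by simp only [h.1 k hk, h.1 (k - 1) (by omega), mul_zero, sub_zero], ?_⟩
  have hmk : PowerSeries.mk (fun n : ℕ => S n - b * S (n - 1)) =
      (1 - C b * X) * PowerSeries.mk fun n : ℕ => S n := by
    rw [← mk_coeffZ ((1 - C b * X) * _)]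
    simp only [coeffZ_one_sub_C_mul_X_mul, coeffZ_mk h.1]
  rw [hmk, mul_assoc, h.2, gen_cons]

theorem sum_coeffZ_gen_mul (h : IsSeriesOf A B S) {M : ℕ} (hM : Multiset.card A ≤ M) (k : ℤ) :
    ∑ j ∈ range (M + 1), coeffZ (gen A) j * S (k - j) = coeffZ (gen B) k := by
  rw [← h.2, mul_comm,
    coeffZ_mul_eq_sum_range (M := M) _ _ fun j hj => coeff_gen_of_card_lt A (by omega),
    coeffZ_mk h.1]
  simp

theorem sum_fin_mul_coeffZ_gen (h : IsSeriesOf A B S) {N : ℕ} (q : ℕ)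
    (hN : q + Multiset.card A < N) (k : ℤ) :
    ∑ r : Fin N, S (k - r) * coeffZ (gen A) (r - q) = coeffZ (gen B) (k - q) := by
  rw [Fin.sum_univ_eq_sum_range (fun r => S (k - r) * coeffZ (gen A) (r - q)),
    ← sum_range_add_sum_Ico _ (show q ≤ N by omega),
    sum_eq_zero fun r hr => by
      rw [coeffZ_of_neg _ (by have := mem_range.1 hr; omega), mul_zero],
    zero_add, sum_Ico_eq_sum_range, ← h.sum_coeffZ_gen_mul (M := N - q - 1) (by omega),
    show N - q - 1 + 1 = N - q by omega]
  refine sum_congr rfl fun j _ => ?_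
  push_cast
  ring_nf

end IsSeriesOf

theorem exists_isSeriesOf (A B : Multiset R) : ∃ S, IsSeriesOf A B S :=
  ⟨coeffZ (gen B * invOfUnit (gen A) 1), fun _ hk => coeffZ_of_neg _ hk, by
    rw [mk_coeffZ, mul_assoc, mul_comm (invOfUnit _ _), gen_mul_invOfUnit, mul_one]⟩

def resultant (A B : Multiset R) : R :=
  (A.map fun a => (B.map fun b => a - b).prod).prod

theorem resultant_zero_right (A : Multiset R) : resultant A 0 = 1 := by
  simp [resultant]

theorem resultant_cons_right (A : Multiset R) (b : R) (B : Multiset R) :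
    resultant A (b ::ₘ B) = (A.map fun a => a - b).prod * resultant A B := by
  simp [resultant, Multiset.prod_map_mul]

theorem neg_one_pow_card_mul_prod_map_sub (A : Multiset R) (b : R) :
    (-1) ^ Multiset.card A * (A.map fun a => b - a).prod = (A.map fun a => a - b).prod := by
  rw [← Multiset.card_map (fun a => b - a), ← Multiset.prod_map_neg, Multiset.map_map]
  simp

theorem det_of_add_one_eq_mul_det {m : ℕ} (S T : ℤ → R) (b : R)
    (hST : ∀ k, S k = T k - b * T (k - 1)) (e : Fin m → ℤ) (w : Fin (m + 1) → R)
    (hw : w (Fin.last m) = 1) (hker : ∀ p, ∑ j, w j * T (e p + j) = 0) :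
    det (of fun p q : Fin m => S (e p + 1 + q)) =
      (-1) ^ m * (∑ j, w j * b ^ (j : ℕ)) * det (of fun p q : Fin m => T (e p + q)) := by
  let E : Matrix (Fin (m + 1)) (Fin (m + 1)) R :=
    of (Fin.cons (fun j => b ^ (j : ℕ)) fun p j => T (e p + j))
  let F : Matrix (Fin (m + 1)) (Fin (m + 1)) R :=
    of fun i j => Fin.cases (E i 0) (fun j => E i j.succ - b * E i j.castSucc) j
  have hEF : det E = det F :=
    det_eq_of_forall_col_eq_smul_add_pred (fun _ => b) (fun _ => rfl) fun i j => by
      simp [F]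
  have hF : det F = det (of fun p q : Fin m => S (e p + 1 + q)) := by
    rw [det_succ_row_zero, Fin.sum_univ_succ, Fin.succAbove_zero,
      sum_eq_zero fun j _ => by simp [F, E, pow_succ, mul_comm], add_zero]
    have hsub : F.submatrix Fin.succ Fin.succ = of fun p q : Fin m => S (e p + 1 + q) := by
      ext p q
      simp only [of_apply, submatrix_apply, Fin.cons_succ, Fin.cases_succ, Fin.val_succ,
        Fin.val_castSucc, Nat.cast_add, Nat.cast_one, hST, F, E]
      ring_nf
    rw [hsub]
    simp [F, E]
  let G : Matrix (Fin (m + 1)) (Fin (m + 1)) R :=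
    E.updateCol (Fin.last m) fun i => ∑ j, w j • E i j
  have hEG : det G = det E := by
    rw [det_updateCol_sum, hw, one_smul]
  have hG : det G =
      (-1) ^ m * (∑ j, w j * b ^ (j : ℕ)) * det (of fun p q : Fin m => T (e p + q)) := by
    rw [det_succ_column G (Fin.last m), Fin.sum_univ_succ, Fin.succAbove_last,
      sum_eq_zero fun p _ => by simp [G, E, hker], add_zero]
    have hsub : G.submatrix Fin.succ Fin.castSucc = of fun p q : Fin m => T (e p + q) := by
      ext p q
      simp [G, E]
    rw [Fin.succAbove_zero, hsub]
    simp [G, E]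
  rw [← hF, ← hEF, ← hEG, hG]

theorem IsSeriesOf.det_add_card {A B : Multiset R} {S SA : ℤ → R} (hS : IsSeriesOf A B S)
    (hSA : IsSeriesOf A 0 SA) (c : Fin (Multiset.card A) → ℤ)
    (hc : ∀ p, 0 < c p + Multiset.card A) :
    det (of fun p q : Fin (Multiset.card A) => S (c p + Multiset.card B + q)) =
      resultant A B * det (of fun p q : Fin (Multiset.card A) => SA (c p + q)) := by
  induction B using Multiset.induction_on generalizing S with
  | empty =>
    rw [hS.unique hSA, resultant_zero_right]
    simp
  | cons b B ih =>
    obtain ⟨T, hT⟩ := exists_isSeriesOf A B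
    have hST : S = fun k => T k - b * T (k - 1) := hS.unique (hT.cons_right b)
    have hker : ∀ p, ∑ j : Fin (Multiset.card A + 1),
        coeffZ (gen A) (Multiset.card A - j) * T (c p + Multiset.card B + j) = 0 := by
      intro p
      rw [sum_fin_coeffZ_gen_rev_mul A fun j => T (c p + Multiset.card B + j),
        ← coeffZ_gen_of_card_lt B (k := c p + Multiset.card B + Multiset.card A)
        (by linarith [hc p]), ← hT.sum_coeffZ_gen_mul le_rfl]
      refine sum_congr rfl fun r hr => ?_
      rw [mem_range] at hr
      congr 2
      omega
    have hpoly : ∑ j : Fin (Multiset.card A + 1),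
        coeffZ (gen A) (Multiset.card A - j) * b ^ (j : ℕ) = (A.map fun a => b - a).prod := by
      rw [sum_fin_coeffZ_gen_rev_mul A fun j => b ^ j, sum_coeffZ_gen_mul_pow]
    have hstep := det_of_add_one_eq_mul_det S T b (fun k => by rw [hST]) _ _
      (by simp [coeffZ_gen_zero]) hker
    rw [hpoly, neg_one_pow_card_mul_prod_map_sub, ih hT] at hstep
    rw [resultant_cons_right, mul_assoc, ← hstep, Multiset.card_cons, Nat.cast_succ]
    simp only [← add_assoc]

theorem schur_eq_det_rev (S : ℤ → R) {m : ℕ} (I : Fin m → ℤ) :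
    schur S I = det (of fun p q : Fin m => S (I p.rev + p.rev + 1 - m + q)) := by
  rw [schur, ← det_submatrix_equiv_self Fin.revPerm]
  congr 1
  ext p q
  simp only [submatrix_apply, of_apply, Fin.revPerm_apply, Fin.val_rev]
  congr 1
  omega

theorem IsSeriesOf.schur_add_card {A B : Multiset R} {S SA : ℤ → R} (hS : IsSeriesOf A B S)
    (hSA : IsSeriesOf A 0 SA) (I : Fin (Multiset.card A) → ℤ) (hI : ∀ p, 0 ≤ I p + p) :
    schur S (fun p => I p + Multiset.card B) = resultant A B * schur SA I := by
  let c : Fin (Multiset.card A) → ℤ := fun p => I p.rev + p.rev + 1 - Multiset.card A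
  rw [schur_eq_det_rev, schur_eq_det_rev,
    ← hS.det_add_card hSA c fun p => by linarith [hI p.rev]]
  congr 1
  ext p q
  simp only [of_apply, c]
  ring_nf

theorem det_eq_mul_det_of_natAdd_castAdd_eq_zero {s m : ℕ}
    (N : Matrix (Fin (s + m)) (Fin (s + m)) R)
    (h : ∀ p q, N (Fin.natAdd s p) (Fin.castAdd m q) = 0) :
    N.det = (N.submatrix (Fin.castAdd m) (Fin.castAdd m)).det *
      (N.submatrix (Fin.natAdd s) (Fin.natAdd s)).det := by
  have h21 : (N.submatrix finSumFinEquiv finSumFinEquiv).toBlocks₂₁ = 0 := by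
    ext p q
    exact h p q
  rw [← det_submatrix_equiv_self finSumFinEquiv, ← fromBlocks_toBlocks (N.submatrix _ _), h21,
    det_fromBlocks_zero₂₁]
  rfl

noncomputable def genColumnOp (A : Multiset R) (s N : ℕ) : Matrix (Fin N) (Fin N) R :=
  of fun r q => if (q : ℕ) < s then coeffZ (gen A) (r - q) else if r = q then 1 else 0

theorem det_genColumnOp (A : Multiset R) (s N : ℕ) : det (genColumnOp A s N) = 1 := by
  have htri : (genColumnOp A s N).IsLowerTriangular := by
    intro r q hrq
    have hrq' : (r : ℕ) < q := by simpa using hrq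
    by_cases hq : (q : ℕ) < s
    · simp [genColumnOp, hq, coeffZ_of_neg _ (show (r : ℤ) - q < 0 by omega)]
    · simp [genColumnOp, hq, Fin.ne_of_lt hrq']
  rw [det_of_isLowerTriangular _ htri]
  refine prod_eq_one fun q _ => ?_
  by_cases hq : (q : ℕ) < s
  · simp [genColumnOp, hq, coeffZ_gen_zero]
  · simp [genColumnOp, hq]

theorem IsSeriesOf.mul_genColumnOp_of_lt {A B : Multiset R} {S : ℤ → R}
    (hS : IsSeriesOf A B S) {s N : ℕ} (hN : s + Multiset.card A ≤ N) (a : Fin N → ℤ)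
    (p : Fin N) {q : Fin N}
    (hq : (q : ℕ) < s) :
    ((of fun p r : Fin N => S (a p - r)) * genColumnOp A s N) p q =
      coeffZ (gen B) (a p - q) := by
  simp only [mul_apply, genColumnOp, of_apply, if_pos hq]
  exact hS.sum_fin_mul_coeffZ_gen q (by omega) (a p)

theorem mul_genColumnOp_of_le {A : Multiset R} {s N : ℕ} (M : Matrix (Fin N) (Fin N) R)
    (p : Fin N) {q : Fin N} (hq : s ≤ (q : ℕ)) : (M * genColumnOp A s N) p q = M p q := by
  simp [mul_apply, genColumnOp, not_lt.2 hq]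

theorem IsSeriesOf.schur_append_add_card {A B : Multiset R} {S SB : ℤ → R}
    (hS : IsSeriesOf A B S) (hSB : IsSeriesOf 0 B SB) {s : ℕ} (J : Fin s → ℤ)
    (I : Fin (Multiset.card A) → ℤ) (hI : ∀ p, 0 ≤ I p + p) :
    schur S (Fin.append J fun p => I p + Multiset.card B) =
      schur SB J * schur S (fun p => I p + Multiset.card B) := by
  set K := Fin.append J fun p => I p + Multiset.card B
  set N := (of fun p r : Fin (s + Multiset.card A) => S (K p + p - r)) *
    genColumnOp A s (s + Multiset.card A)
  have hN : schur S K = det N := by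
    rw [det_mul, det_genColumnOp, mul_one, schur]
  rw [hN, det_eq_mul_det_of_natAdd_castAdd_eq_zero N fun p q => ?_]
  · congr 1
    · rw [schur, hSB.eq_coeffZ_gen]
      congr 1
      ext p q
      simp [N, hS.mul_genColumnOp_of_lt le_rfl (fun p => K p + p), K]
    · rw [schur]
      congr 1
      ext p q
      simp only [submatrix_apply, Fin.val_natAdd, le_add_iff_nonneg_right, zero_le,
        mul_genColumnOp_of_le, of_apply, Fin.append_right, Nat.cast_add, N, K]
      ring_nf
  · simp only [N]
    rw [hS.mul_genColumnOp_of_lt le_rfl (fun p => K p + p) _ (by simp)]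
    apply coeffZ_gen_of_card_lt
    have hq : (q : ℤ) < s := by exact_mod_cast q.isLt
    simp only [Fin.append_right, Fin.val_natAdd, Nat.cast_add, Fin.val_castAdd, K]
    linarith [hI p]

end

theorem factorization_property_general {R : Type*} [CommRing R] (m n s : ℕ) (A B : Multiset R)
    (hA : Multiset.card A = m) (hB : Multiset.card B = n)
    (SAB SA SB : ℤ → R) (hSAB : IsSeriesOf A B SAB)
    (hSA : IsSeriesOf A 0 SA) (hSB : IsSeriesOf 0 B SB)
    (I : Fin m → ℕ) (J : Fin s → ℕ) :
    schur SAB (Fin.append (fun q : Fin s => (J q : ℤ)) (fun p : Fin m => (I p : ℤ) + n)) =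
      schur SA (fun p => (I p : ℤ)) *
        (A.map (fun a => (B.map fun b => a - b).prod)).prod *
          schur SB (fun q => (J q : ℤ)) := by
  subst hA hB
  have hI : ∀ p, 0 ≤ (I p : ℤ) + p := fun p => by positivity
  rw [hSAB.schur_append_add_card hSB _ _ hI, hSAB.schur_add_card hSA _ hI, resultant]
  ring

/-- **Factorization property.** For alphabets `A` of cardinality `m` and `B` of
cardinality `n`, and partitions `I = (i_1 ≤ … ≤ i_m)`, `J = (j_1 ≤ … ≤ j_s)` such
that `(j_1, …, j_s, i_1 + n, …, i_m + n)` is a partition,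
`S_{(j_1,…,j_s,i_1+n,…,i_m+n)}(A - B) = S_I(A) · R(A,B) · S_J(-B)`. -/
theorem factorization_property {R : Type*} [CommRing R] (m n s : ℕ) (A B : Multiset R)
    (hA : Multiset.card A = m) (hB : Multiset.card B = n)
    (SAB SA SB : ℤ → R) (hSAB : IsSeriesOf A B SAB)
    (hSA : IsSeriesOf A 0 SA) (hSB : IsSeriesOf 0 B SB)
    (I : Fin m → ℕ) (hI : Monotone I) (J : Fin s → ℕ) (hJ : Monotone J)
    (hK : Monotone (Fin.append (fun q : Fin s => (J q : ℤ))
          (fun p : Fin m => (I p : ℤ) + n))) :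
    schur SAB (Fin.append (fun q : Fin s => (J q : ℤ)) (fun p : Fin m => (I p : ℤ) + n)) =
      schur SA (fun p => (I p : ℤ)) *
        (A.map (fun a => (B.map fun b => a - b).prod)).prod *
          schur SB (fun q => (J q : ℤ)) :=
  factorization_property_general m n s A B hA hB SAB SA SB hSAB hSA hSB I J
end

section
/- Let x_1, x_2 be independent variables and let D be the alphabet (2x_1, 2x_2, x_1 + x_2). Then F^{(3)}_2 evaluated on the difference (x_1, x_2) - D equals -5 · (x_1 x_2)^2 (x_1 - 2x_2)(x_2 - 2x_1). Concretely, S_{(2,2,2)} + 5 S_{(1,2,3)} + 6 S_{(1,1,4)} + 19 S_{(2,4)} + 30 S_{(1,5)} + 36 S_{(6)}, each evaluated on (x_1,x_2) - D, equals -5 (x_1 x_2)^2 (x_1 - 2x_2)(x_2 - 2x_1). -/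
/-! Multiplying `∑ S_j z^j` by `(1 - x₁z)(1 - x₂z)` turns the defining identity into the linear
recurrence `S_n - (x₁ + x₂) S_{n-1} + x₁x₂ S_{n-2} = (-1)^n e_n(D)`, valid for every `n ≥ 0`
because `S` vanishes at negative indices. It gives `S_0, …, S_6` in closed form; the
Jacobi–Trudi determinants involved have size at most 3, so expanding them reduces the claim to a
polynomial identity in `x₁, x₂`. -/

open PowerSeries

section

variable {R : Type*} [CommRing R]

theorem gen_pair (a b : R) : gen {a, b} = 1 - C (a + b) * X + C (a * b) * X ^ 2 := by
  simp only [gen, Multiset.insert_eq_cons, Multiset.map_cons, Multiset.map_singleton,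
    Multiset.prod_cons, Multiset.prod_singleton, map_add, map_mul]
  ring

theorem gen_triple (a b c : R) :
    gen {a, b, c} = 1 - C (a + b + c) * X + C (a * b + a * c + b * c) * X ^ 2 -
      C (a * b * c) * X ^ 3 := by
  simp only [gen, Multiset.insert_eq_cons, Multiset.map_cons, Multiset.map_singleton,
    Multiset.prod_cons, Multiset.prod_singleton, map_add, map_mul]
  ring

theorem coeff_mk_mul_X_pow {S : ℤ → R} (hS : ∀ j : ℤ, j < 0 → S j = 0) (n k : ℕ) :
    coeff n (mk (fun m : ℕ => S m) * X ^ k) = S (n - k) := by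
  rw [coeff_mul_X_pow']
  split_ifs with h
  · rw [coeff_mk, Nat.cast_sub h]
  · exact (hS _ (by omega)).symm

theorem IsSeriesOf.recurrence {a b : R} {B : Multiset R} {S : ℤ → R}
    (hS : IsSeriesOf {a, b} B S) (n : ℕ) :
    S n - (a + b) * S (n - 1) + a * b * S (n - 2) = coeff n (gen B) := by
  set f : R⟦X⟧ := mk fun m : ℕ => S m
  have expand : f * gen {a, b} = f - C (a + b) * (f * X ^ 1) + C (a * b) * (f * X ^ 2) := by
    rw [gen_pair]; ring
  rw [← hS.2, expand, map_add, map_sub, coeff_C_mul, coeff_C_mul, coeff_mk_mul_X_pow hS.1,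
    coeff_mk_mul_X_pow hS.1, coeff_mk, Nat.cast_one, Nat.cast_ofNat]

theorem schur_fin_one (S : ℤ → R) (i : ℤ) : schur S ![i] = S i := by
  simp [schur]

theorem schur_fin_two (S : ℤ → R) (i j : ℤ) :
    schur S ![i, j] = S i * S j - S (i - 1) * S (j + 1) := by
  simp [schur, Matrix.det_fin_two, sub_eq_add_neg, add_comm]

theorem schur_fin_three (S : ℤ → R) (i j k : ℤ) :
    schur S ![i, j, k] =
      S i * (S j * S k - S (j - 1) * S (k + 1)) -
        S (i - 1) * (S (j + 1) * S k - S (j - 1) * S (k + 2)) +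
        S (i - 2) * (S (j + 1) * S (k + 1) - S j * S (k + 2)) := by
  simp [schur, Matrix.det_fin_three]
  ring_nf

end

/-- `F^{(3)}_2((x_1,x_2) - D) = -5 (x_1 x_2)^2 (x_1 - 2x_2)(x_2 - 2x_1)` for
`D = (2x_1, 2x_2, x_1 + x_2)`, where
`F^{(3)}_2 = S_{(2,2,2)} + 5 S_{(1,2,3)} + 6 S_{(1,1,4)} + 19 S_{(2,4)} + 30 S_{(1,5)} + 36 S_{(6)}`. -/
theorem F32_on_III22 {R : Type*} [CommRing R] (x1 x2 : R)
    (S : ℤ → R) (hS : IsSeriesOf {x1, x2} {2 * x1, 2 * x2, x1 + x2} S) :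
    schur S ![2, 2, 2] + 5 * schur S ![1, 2, 3] + 6 * schur S ![1, 1, 4] +
        19 * schur S ![2, 4] + 30 * schur S ![1, 5] + 36 * schur S ![6] =
      -5 * ((x1 * x2) ^ 2 * (x1 - 2 * x2) * (x2 - 2 * x1)) := by
  have hrec := hS.recurrence
  simp only [gen_triple, map_sub, map_add, add_mul, coeff_one, coeff_C_mul, coeff_X,
    coeff_X_pow] at hrec
  have vneg : S (-1) = 0 := hS.1 (-1) (by norm_num)
  have v0 : S 0 = 1 := by simpa [hS.1] using hrec 0
  have v1 : S 1 = -2 * (x1 + x2) := by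
    have := hrec 1; norm_num [vneg, v0] at this; linear_combination this
  have v2 : S 2 = 3 * (x1 * x2) := by
    have := hrec 2; norm_num [v0, v1] at this; linear_combination this
  have v3 : S 3 = x1 * x2 * (x1 + x2) := by
    have := hrec 3; norm_num [v1, v2] at this; linear_combination this
  have v4 : S 4 = x1 * x2 * (x1 ^ 2 - x1 * x2 + x2 ^ 2) := by
    have := hrec 4; norm_num [v2, v3] at this; linear_combination this
  have v5 : S 5 = x1 * x2 * (x1 ^ 3 - x1 ^ 2 * x2 - x1 * x2 ^ 2 + x2 ^ 3) := by
    have := hrec 5; norm_num [v3, v4] at this; linear_combination this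
  have v6 : S 6 = x1 * x2 * (x1 ^ 4 - x1 ^ 3 * x2 - x1 ^ 2 * x2 ^ 2 - x1 * x2 ^ 3 + x2 ^ 4) := by
    have := hrec 6; norm_num [v4, v5] at this; linear_combination this
  simp only [schur_fin_one, schur_fin_two, schur_fin_three]
  norm_num [vneg, v0, v1, v2, v3, v4, v5, v6]
  ring
end
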